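/- arXiv:2512.20659 — 2 statements merged into one kernel-verified Lean document; each statement's English description precedes it below -/
import Mathlib

section
/- Let 0 ≤ a < b ≤ 1 and 0 < ε < 1/2. Then there exist positive integers m and n such that the polynomial p(x) = (1 - x^m)^n satisfies p(x) > 1 - ε for all x with 0 ≤ x ≤ a, and p(x) < ε for all x with b ≤ x ≤ 1. -/
set_option maxHeartbeats 1000000

/-- Jewett's lemma: for `0 ≤ a < b ≤ 1` and `0 < ε < 1/2` there is a polynomial
`p(x) = (1 - x^m)^n` with `p > 1 - ε` on `[0,a]` and `p < ε` on `[b,1]`. -/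
theorem jewett_lemma (a b ε : ℝ) (ha : 0 ≤ a) (hab : a < b) (hb : b ≤ 1)
    (hε0 : 0 < ε) (hε : ε < 1 / 2) :
    ∃ m n : ℕ, 0 < m ∧ 0 < n ∧
      (∀ x : ℝ, 0 ≤ x → x ≤ a → (1 - x ^ m) ^ n > 1 - ε) ∧
      (∀ x : ℝ, b ≤ x → x ≤ 1 → (1 - x ^ m) ^ n < ε) := by
  have hb0 : 0 < b := lt_of_le_of_lt ha hab
  have hab1 : a / b < 1 := (div_lt_one hb0).2 hab
  have hab0 : 0 ≤ a / b := div_nonneg ha hb0.le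
  have hε3 : 0 < ε ^ 3 := by positivity
  obtain ⟨m, hm⟩ := exists_pow_lt_of_lt_one hε3 hab1
  have hm0 : 0 < m := by
    rcases Nat.eq_zero_or_pos m with h | h
    · exfalso; rw [h, pow_zero] at hm
      have : ε ^ 3 < 1 := pow_lt_one₀ hε0.le (by linarith) (by norm_num)
      linarith
    · exact h
  have ha1 : a ≤ 1 := le_trans hab.le hb
  set t := b ^ m with ht
  have htpos : 0 < t := pow_pos hb0 m
  have ht1 : t ≤ 1 := pow_le_one₀ hb0.le hb
  set n := ⌈1 / (ε * t)⌉₊ with hn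
  have hpos : 0 < 1 / (ε * t) := by positivity
  have hn0 : 0 < n := Nat.ceil_pos.2 hpos
  have hnl : 1 / (ε * t) ≤ (n : ℝ) := Nat.le_ceil _
  have hnu : (n : ℝ) < 1 / (ε * t) + 1 := Nat.ceil_lt_add_one hpos.le
  have ham1 : a ^ m ≤ 1 := pow_le_one₀ ha ha1
  have ham0 : 0 ≤ a ^ m := pow_nonneg ha m
  have hameq : a ^ m = (a / b) ^ m * t := by
    rw [ht, div_pow, div_mul_cancel₀]
    exact (pow_pos hb0 m).ne'
  -- key: n * a^m < ε
  have hkey : (n : ℝ) * a ^ m < ε := by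
    have h1 : (n : ℝ) * a ^ m ≤ (1 / (ε * t) + 1) * a ^ m :=
      mul_le_mul_of_nonneg_right hnu.le ham0
    have h2 : (1 / (ε * t) + 1) * a ^ m < ε := by
      rw [hameq]
      have hεt : 0 < ε * t := by positivity
      rw [div_add' _ _ _ hεt.ne']
      rw [div_mul_eq_mul_div, div_lt_iff₀ hεt]
      have hmt : (a / b) ^ m * t < ε ^ 3 * t := mul_lt_mul_of_pos_right hm htpos
      have h3 : (1 + ε * t) * ((a / b) ^ m * t) < (1 + ε * t) * (ε ^ 3 * t) :=
        mul_lt_mul_of_pos_left hmt (by positivity)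
      have hεt1 : ε * t ≤ ε := by nlinarith
      have h4 : (1 + ε * t) * (ε ^ 3 * t) ≤ ε * (ε * t) := by
        nlinarith [mul_pos (mul_pos hε0 hε0) htpos, mul_pos hε0 htpos,
          mul_pos (mul_pos (mul_pos hε0 hε0) hε0) htpos]
      linarith
    linarith
  -- Bernoulli lower bound at a
  have hBa : 1 - (n : ℝ) * a ^ m ≤ (1 - a ^ m) ^ n := by
    have := one_add_mul_le_pow (show (-2 : ℝ) ≤ -(a ^ m) by linarith) n
    simpa [sub_eq_add_neg, mul_neg] using this
  refine ⟨m, n, hm0, hn0, ?_, ?_⟩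
  · intro x hx hxa
    have hxm : x ^ m ≤ a ^ m := pow_le_pow_left₀ hx hxa m
    have h1 : (1 - a ^ m) ^ n ≤ (1 - x ^ m) ^ n :=
      pow_le_pow_left₀ (by linarith) (by linarith) n
    linarith
  · intro x hbx hx1
    have hx0 : 0 ≤ x := le_trans hb0.le hbx
    have hxm : t ≤ x ^ m := pow_le_pow_left₀ hb0.le hbx m
    have hxm1 : x ^ m ≤ 1 := pow_le_one₀ hx0 hx1
    have h1 : (1 - x ^ m) ^ n ≤ (1 - t) ^ n :=
      pow_le_pow_left₀ (by linarith) (by linarith) n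
    have hB : 1 + (n : ℝ) * t ≤ (1 + t) ^ n := by
      have := one_add_mul_le_pow (show (-2 : ℝ) ≤ t by linarith) n
      simpa using this
    have hBpos : (0 : ℝ) < 1 + (n : ℝ) * t := by positivity
    have h2 : (1 - t) ^ n * (1 + t) ^ n ≤ 1 := by
      rw [← mul_pow]
      apply pow_le_one₀ (by nlinarith) (by nlinarith)
    have h3 : (1 - t) ^ n ≤ 1 / (1 + t) ^ n := by
      rw [le_div_iff₀ (pow_pos (by linarith) n)]
      exact h2
    have h4 : 1 / (1 + t) ^ n ≤ 1 / (1 + (n : ℝ) * t) :=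
      one_div_le_one_div_of_le hBpos hB
    have h5 : 1 ≤ (n : ℝ) * (ε * t) := (div_le_iff₀ (by positivity)).1 hnl
    have h6 : 1 / (1 + (n : ℝ) * t) < ε := by
      rw [div_lt_iff₀ hBpos]
      nlinarith [h5, hε0]
    linarith
end

section
/- Let f : [0,1] → 𝒦_C be a continuous interval-valued function. For a positive integer n, 0 < δ < 1/(2n), let φ_0, ..., φ_n : [0,1] → [0,1] be the trapezoidal partition of unity functions satisfying ∑ φ_j ≡ 1, with at most two nonzero terms at each point, where φ_j is supported in (a_{j-1}-δ, a_{j+1}+δ) ∩ [0,1] for a_j = j/n (supp φ_0 ⊆ [0, a_1+δ), supp φ_n ⊆ (a_{n-1}-δ, 1]). Define g(x) = ∑_{j=0}^{n} φ_j(x) · f(a_j), where scalar multiplication and addition of intervals are pointwise Minkowski operations. Then for all x ∈ [0,1], d_H(f(x), g(x)) ≤ 3 ω^K(f, 1/n), where ω^K(f, δ) = sup{ d_H(f(x), f(y)) : |x-y| < δ }. -/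
open Set Finset

/-- Hausdorff distance between two compact intervals given by their endpoints. -/
noncomputable def dH (A B : ℝ × ℝ) : ℝ := max |A.1 - B.1| |A.2 - B.2|

/-- Modulus of continuity of an interval-valued function on `[0,1]`. -/
noncomputable def modK (F : ℝ → ℝ × ℝ) (δ : ℝ) : ℝ :=
  sSup {r | ∃ x ∈ Icc (0:ℝ) 1, ∃ y ∈ Icc (0:ℝ) 1, |x - y| < δ ∧ r = dH (F x) (F y)}

lemma dH_triangle (A B C : ℝ × ℝ) : dH A C ≤ dH A B + dH B C := by
  unfold dH
  apply max_le
  · calc |A.1 - C.1| ≤ |A.1 - B.1| + |B.1 - C.1| := abs_sub_le _ _ _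
      _ ≤ _ := add_le_add (le_max_left _ _) (le_max_left _ _)
  · calc |A.2 - C.2| ≤ |A.2 - B.2| + |B.2 - C.2| := abs_sub_le _ _ _
      _ ≤ _ := add_le_add (le_max_right _ _) (le_max_right _ _)

lemma dH_nonneg (A B : ℝ × ℝ) : 0 ≤ dH A B :=
  le_trans (abs_nonneg _) (le_max_left _ _)

/-- Approximation of a continuous interval-valued function by the trapezoidal
partition of unity: `d_H(f(x), ∑_j φ_j(x)·f(j/n)) ≤ 3 ω^K(f, 1/n)` on `[0,1]`. -/
theorem interval_trapezoidal_approximation (f : ℝ → ℝ × ℝ)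
    (hval : ∀ x ∈ Icc (0:ℝ) 1, (f x).1 ≤ (f x).2)
    (hcont : ContinuousOn f (Icc 0 1))
    (n : ℕ) (hn : 0 < n) (δ : ℝ) (hδ0 : 0 < δ) (hδ : δ < 1 / (2 * n))
    (φ : ℕ → ℝ → ℝ)
    (hφc : ∀ j ≤ n, ContinuousOn (φ j) (Icc 0 1))
    (hφrange : ∀ j ≤ n, ∀ x ∈ Icc (0:ℝ) 1, φ j x ∈ Icc (0:ℝ) 1)
    (hφsum : ∀ x ∈ Icc (0:ℝ) 1, ∑ j ∈ Finset.range (n + 1), φ j x = 1)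
    (hφloc : ∀ x ∈ Icc (0:ℝ) 1, ∃ k ≤ n,
      (∀ j ≤ n, j ≠ k → j ≠ k + 1 → φ j x = 0) ∧
      |x - (k : ℝ) / n| < 1 / n ∧
      (φ (k + 1) x ≠ 0 → |x - ((k : ℝ) + 1) / n| < 2 / n)) :
    ∀ x ∈ Icc (0:ℝ) 1,
      dH (f x)
        (∑ j ∈ Finset.range (n + 1), φ j x * (f ((j : ℝ) / n)).1,
         ∑ j ∈ Finset.range (n + 1), φ j x * (f ((j : ℝ) / n)).2)
      ≤ 3 * modK f (1 / n) := by
  intro x hx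
  have hnpos : (0:ℝ) < n := by exact_mod_cast hn
  set M := modK f (1/n) with hMdef
  obtain ⟨C, hC⟩ := isCompact_Icc.exists_bound_of_continuousOn hcont
  have hbdd : BddAbove {r | ∃ a ∈ Icc (0:ℝ) 1, ∃ b ∈ Icc (0:ℝ) 1,
      |a - b| < 1/n ∧ r = dH (f a) (f b)} := by
    refine ⟨2 * C, ?_⟩
    rintro r ⟨a, ha, b, hb, -, rfl⟩
    have h1 : |(f a).1| ≤ C := le_trans (norm_fst_le (f a)) (hC a ha)
    have h2 : |(f b).1| ≤ C := le_trans (norm_fst_le (f b)) (hC b hb)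
    have h3 : |(f a).2| ≤ C := le_trans (norm_snd_le (f a)) (hC a ha)
    have h4 : |(f b).2| ≤ C := le_trans (norm_snd_le (f b)) (hC b hb)
    have e1 : |(f a).1 - (f b).1| ≤ 2 * C := by
      calc |(f a).1 - (f b).1| ≤ |(f a).1| + |(f b).1| := abs_sub _ _
        _ ≤ 2 * C := by linarith
    have e2 : |(f a).2 - (f b).2| ≤ 2 * C := by
      calc |(f a).2 - (f b).2| ≤ |(f a).2| + |(f b).2| := abs_sub _ _
        _ ≤ 2 * C := by linarith
    exact max_le e1 e2
  have key : ∀ a ∈ Icc (0:ℝ) 1, ∀ b ∈ Icc (0:ℝ) 1, |a - b| < 1/n →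
      dH (f a) (f b) ≤ M :=
    fun a ha b hb hab => le_csSup hbdd ⟨a, ha, b, hb, hab, rfl⟩
  have hM0 : 0 ≤ M := by
    have h := key 0 (by norm_num) 0 (by norm_num) (by simpa using by positivity)
    exact le_trans (dH_nonneg _ _) h
  have key2 : ∀ a ∈ Icc (0:ℝ) 1, ∀ b ∈ Icc (0:ℝ) 1, |a - b| < 2/n →
      dH (f a) (f b) ≤ 2 * M := by
    intro a ha b hb hab
    have hm : (a + b) / 2 ∈ Icc (0:ℝ) 1 := by
      constructor <;> [linarith [ha.1, hb.1]; linarith [ha.2, hb.2]]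
    have h1 : |a - (a + b) / 2| < 1/n := by
      have e : a - (a + b)/2 = (a - b)/2 := by ring
      rw [e, abs_div, show |(2:ℝ)| = 2 by norm_num]
      have h2n : (2:ℝ)/n/2 = 1/n := by ring
      linarith
    have h2 : |(a + b) / 2 - b| < 1/n := by
      have e : (a + b)/2 - b = (a - b)/2 := by ring
      rw [e, abs_div, show |(2:ℝ)| = 2 by norm_num]
      have h2n : (2:ℝ)/n/2 = 1/n := by ring
      linarith
    calc dH (f a) (f b) ≤ dH (f a) (f ((a+b)/2)) + dH (f ((a+b)/2)) (f b) :=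
          dH_triangle _ _ _
      _ ≤ M + M := add_le_add (key a ha _ hm h1) (key _ hm b hb h2)
      _ = 2 * M := by ring
  obtain ⟨k, hk, hzero, hxk, hxk1⟩ := hφloc x hx
  have haj : ∀ j ≤ n, ((j:ℝ)/n) ∈ Icc (0:ℝ) 1 := by
    intro j hj
    constructor
    · positivity
    · rw [div_le_one hnpos]; exact_mod_cast hj
  have main : ∀ g : ℝ × ℝ → ℝ, (∀ A B : ℝ × ℝ, |g A - g B| ≤ dH A B) →
      |(∑ j ∈ Finset.range (n+1), φ j x * g (f ((j:ℝ)/n))) - g (f x)| ≤ 2 * M := by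
    intro g hg
    have hrw : ∑ j ∈ Finset.range (n+1), φ j x * (g (f ((j:ℝ)/n)) - g (f x))
        = (∑ j ∈ Finset.range (n+1), φ j x * g (f ((j:ℝ)/n))) - g (f x) := by
      simp only [mul_sub]
      rw [Finset.sum_sub_distrib, ← Finset.sum_mul, hφsum x hx, one_mul]
    rw [← hrw]
    calc |∑ j ∈ Finset.range (n+1), φ j x * (g (f ((j:ℝ)/n)) - g (f x))|
        ≤ ∑ j ∈ Finset.range (n+1), |φ j x * (g (f ((j:ℝ)/n)) - g (f x))| :=
          Finset.abs_sum_le_sum_abs _ _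
      _ ≤ ∑ j ∈ Finset.range (n+1), φ j x * (2 * M) := by
          apply Finset.sum_le_sum
          intro j hj
          have hjn : j ≤ n := Nat.lt_succ_iff.mp (Finset.mem_range.mp hj)
          have hφnn : 0 ≤ φ j x := (hφrange j hjn x hx).1
          by_cases hz : φ j x = 0
          · simp [hz]
          · have hjk : j = k ∨ j = k + 1 := by
              by_contra hcon
              push_neg at hcon
              exact hz (hzero j hjn hcon.1 hcon.2)
            rw [abs_mul, abs_of_nonneg hφnn]
            apply mul_le_mul_of_nonneg_left _ hφnn
            rcases hjk with rfl | rfl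
            · have h1 : |(j:ℝ)/n - x| < 1/n := by rwa [abs_sub_comm]
              calc |g (f ((j:ℝ)/n)) - g (f x)| ≤ dH (f ((j:ℝ)/n)) (f x) := hg _ _
                _ ≤ M := key _ (haj j hjn) x hx h1
                _ ≤ 2 * M := by linarith
            · have hcast : ((k:ℝ) + 1) = ((k + 1 : ℕ) : ℝ) := by push_cast; ring
              have h1 : |((k+1 : ℕ):ℝ)/n - x| < 2/n := by
                rw [abs_sub_comm, ← hcast]
                exact hxk1 hz
              calc |g (f (((k+1:ℕ):ℝ)/n)) - g (f x)|
                  ≤ dH (f (((k+1:ℕ):ℝ)/n)) (f x) := hg _ _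
                _ ≤ 2 * M := key2 _ (haj _ hjn) x hx h1
      _ = (∑ j ∈ Finset.range (n+1), φ j x) * (2 * M) := by
          rw [Finset.sum_mul]
      _ = 2 * M := by rw [hφsum x hx, one_mul]
  have h1 := main Prod.fst (fun A B => le_max_left _ _)
  have h2 := main Prod.snd (fun A B => le_max_right _ _)
  rw [abs_sub_comm] at h1 h2
  unfold dH
  simp only
  apply max_le <;> [exact le_trans h1 (by linarith); exact le_trans h2 (by linarith)]
end
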